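/- For a unit vector ω ∈ ℝ³ and p ∈ ℝ³ define b_{ij}(ω,p) = δ_{ij} − ω_i p̂_j/(1 + p̂·ω) for i,j ∈ {1,2,3}. Then: (a) |b_{ij}(ω,p)| ≤ 2 p₀² + 1 for all i,j; and (b) there is an absolute constant C such that for any fixed x, p ∈ ℝ³, setting ω(y) = (x − y)/|x − y| for y ≠ x, one has | Σ_{j=1}^{3} ∂_{y_j} ( b_{ij}(ω(y), p) ) | ≤ C p₀² / |x − y| for each i ∈ {1,2,3} and all y ≠ x. -/

import Mathlib

/-!
Both bounds rest on `1 + p̂·ω ≥ 1 - |p̂| = 1 / (p₀ (p₀ + |p|)) ≥ 1 / (2 p₀²)` for unit `ω`.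

For (b), put `u = x - y`, `q = p̂` and `D = |u| + q·u ≥ |u| / (2 p₀²)`. Clearing `|u|` gives
`b_{ij}(ω(y), p) = δ_{ij} - q_j u_i / D`, and since `q_j` does not depend on `y`, the divergence
`Σ_j ∂_{y_j} b_{ij}` collapses to the derivative of `v ↦ v_i / (|v| + q·v)` at `u` in the direction `q`.
Using `|q|² = 1 - p₀⁻²` this equals `q_i / D - u_i / (|u| D) + u_i / (p₀² D²)`, and each term is at
most a multiple of `1 / D ≤ 2 p₀² / |u|`.
-/

noncomputable section

open Real MeasureTheory
open scoped RealInnerProductSpace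

/-- The momentum space `ℝ³`. -/
abbrev E3 : Type := EuclideanSpace ℝ (Fin 3)

/-- `p₀ = √(1 + |p|²)`. -/
def p0 (p : E3) : ℝ := Real.sqrt (1 + ‖p‖ ^ 2)

/-- `p̂ = p / p₀`. -/
def phat (p : E3) : E3 := (p0 p)⁻¹ • p

/-- The cross product in `ℝ³`. -/
def cross3 (a b : E3) : E3 :=
  (WithLp.equiv 2 (Fin 3 → ℝ)).symm
    ![a 1 * b 2 - a 2 * b 1, a 2 * b 0 - a 0 * b 2, a 0 * b 1 - a 1 * b 0]

/-- The Glassey–Strauss coefficients `b_{ij}(ω,p) = δ_{ij} − ω_i p̂_j/(1 + p̂·ω)`. -/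
def bmat (ω p : E3) (i j : Fin 3) : ℝ :=
  (if i = j then 1 else 0) - ω i * phat p j / (1 + ⟪phat p, ω⟫)

lemma p0_pos (p : E3) : 0 < p0 p := Real.sqrt_pos.mpr (by positivity)

lemma p0_sq (p : E3) : p0 p ^ 2 = 1 + ‖p‖ ^ 2 := Real.sq_sqrt (by positivity)

lemma p0_sq_pos (p : E3) : 0 < p0 p ^ 2 := pow_pos (p0_pos p) 2

lemma norm_lt_p0 (p : E3) : ‖p‖ < p0 p := by
  nlinarith [p0_sq p, p0_pos p, norm_nonneg p]

lemma norm_phat (p : E3) : ‖phat p‖ = ‖p‖ / p0 p := by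
  rw [phat, norm_smul, norm_inv, Real.norm_of_nonneg (p0_pos p).le, inv_mul_eq_div]

lemma norm_phat_lt_one (p : E3) : ‖phat p‖ < 1 := by
  rw [norm_phat, div_lt_one (p0_pos p)]
  exact norm_lt_p0 p

lemma norm_phat_sq (p : E3) : ‖phat p‖ ^ 2 = 1 - (p0 p ^ 2)⁻¹ := by
  have := (p0_pos p).ne'
  rw [norm_phat, div_pow]
  field_simp
  linarith [p0_sq p]

lemma inv_two_mul_p0_sq_le_one_sub_norm_phat (p : E3) : (2 * p0 p ^ 2)⁻¹ ≤ 1 - ‖phat p‖ := by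
  have h := p0_pos p
  rw [norm_phat, one_sub_div h.ne', inv_le_iff_one_le_mul₀ (by positivity), div_mul_eq_mul_div,
    le_div_iff₀ h]
  nlinarith [p0_sq p, norm_lt_p0 p, norm_nonneg p]

lemma norm_div_two_mul_p0_sq_le_norm_add_inner (p v : E3) :
    ‖v‖ / (2 * p0 p ^ 2) ≤ ‖v‖ + ⟪phat p, v⟫ := by
  have hinner : -(‖phat p‖ * ‖v‖) ≤ ⟪phat p, v⟫ := neg_le_of_abs_le (abs_real_inner_le_norm _ _)
  have := mul_le_mul_of_nonneg_left (inv_two_mul_p0_sq_le_one_sub_norm_phat p) (norm_nonneg v)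
  rw [div_eq_mul_inv]
  nlinarith

lemma abs_apply_le_norm (v : E3) (i : Fin 3) : |v i| ≤ ‖v‖ := PiLp.norm_apply_le v i

lemma abs_bmat_le (ω p : E3) (hω : ‖ω‖ = 1) (i j : Fin 3) :
    |bmat ω p i j| ≤ 2 * p0 p ^ 2 + 1 := by
  have hden : (2 * p0 p ^ 2)⁻¹ ≤ 1 + ⟪phat p, ω⟫ := by
    simpa [hω] using norm_div_two_mul_p0_sq_le_norm_add_inner p ω
  have hP : 0 < 2 * p0 p ^ 2 := by linarith [p0_sq_pos p]
  have hpos : 0 < 1 + ⟪phat p, ω⟫ := lt_of_lt_of_le (inv_pos.mpr hP) hden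
  have hnum : |ω i * phat p j| ≤ 1 := by
    rw [abs_mul]
    exact mul_le_one₀ (hω ▸ abs_apply_le_norm ω i) (abs_nonneg _)
      ((abs_apply_le_norm _ j).trans (norm_phat_lt_one p).le)
  have hfrac : |ω i * phat p j / (1 + ⟪phat p, ω⟫)| ≤ 2 * p0 p ^ 2 := by
    rw [abs_div, abs_of_pos hpos, div_eq_mul_inv]
    calc |ω i * phat p j| * (1 + ⟪phat p, ω⟫)⁻¹ ≤ (1 + ⟪phat p, ω⟫)⁻¹ :=
          mul_le_of_le_one_left (inv_pos.mpr hpos).le hnum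
      _ ≤ 2 * p0 p ^ 2 := inv_le_of_inv_le₀ hP hden
  have hδ : |(if i = j then (1 : ℝ) else 0)| ≤ 1 := by split_ifs <;> simp
  calc |bmat ω p i j|
      ≤ |(if i = j then (1 : ℝ) else 0)| + |ω i * phat p j / (1 + ⟪phat p, ω⟫)| := abs_sub _ _
    _ ≤ 2 * p0 p ^ 2 + 1 := by linarith

section InnerProductSpace

variable {F : Type*} [NormedAddCommGroup F] [InnerProductSpace ℝ F]

lemma hasFDerivAt_norm {u : F} (hu : u ≠ 0) :
    HasFDerivAt (fun v : F => ‖v‖) (‖u‖⁻¹ • innerSL ℝ u) u := by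
  have h := (hasStrictFDerivAt_norm_sq u).hasFDerivAt.sqrt (by positivity)
  simp only [Real.sqrt_sq (norm_nonneg _)] at h
  convert h using 1
  ext w
  simp
  ring

lemma hasFDerivAt_div_norm_add_inner (ℓ : F →L[ℝ] ℝ) (q : F) {u : F} (hu : u ≠ 0)
    (hN : ‖u‖ + ⟪q, u⟫ ≠ 0) :
    HasFDerivAt (fun v => ℓ v / (‖v‖ + ⟪q, v⟫))
      ((‖u‖ + ⟪q, u⟫)⁻¹ • ℓ -
        (ℓ u / (‖u‖ + ⟪q, u⟫) ^ 2) • (‖u‖⁻¹ • innerSL ℝ u + innerSL ℝ q)) u := by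
  have hN' : HasFDerivAt (fun v => ‖v‖ + ⟪q, v⟫) (‖u‖⁻¹ • innerSL ℝ u + innerSL ℝ q) u :=
    (hasFDerivAt_norm hu).add (innerSL ℝ q).hasFDerivAt
  have h := ℓ.hasFDerivAt.fun_mul ((hasDerivAt_inv hN).comp_hasFDerivAt u hN')
  simp only [div_eq_mul_inv]
  refine h.congr_fderiv ?_
  ext w
  simp
  ring

end InnerProductSpace

lemma sum_fderiv_const_sub_mul_apply_single {ι : Type*} [Fintype ι] [DecidableEq ι]
    {g : EuclideanSpace ℝ ι → ℝ} {g' : EuclideanSpace ℝ ι →L[ℝ] ℝ} {y : EuclideanSpace ℝ ι}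
    (hg : HasFDerivAt g g' y) (c : ι → ℝ) (q : EuclideanSpace ℝ ι) :
    ∑ j, fderiv ℝ (fun z => c j - q j * g z) y (EuclideanSpace.single j 1) = -g' q := by
  conv_rhs => rw [← (EuclideanSpace.basisFun ι ℝ).sum_repr q]
  simp [fderiv_const_sub, fderiv_const_mul hg.differentiableAt, hg.fderiv, map_sum]

lemma bmat_smul_inv_norm (v p : E3) (i j : Fin 3) :
    bmat (‖v‖⁻¹ • v) p i j =
      (if i = j then 1 else 0) - phat p j * (v i / (‖v‖ + ⟪phat p, v⟫)) := by
  rcases eq_or_ne v 0 with rfl | hv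
  · simp [bmat]
  · have : ‖v‖ ≠ 0 := norm_ne_zero_iff.mpr hv
    simp only [bmat, PiLp.smul_apply, smul_eq_mul, real_inner_smul_right]
    congr 1
    field_simp

lemma sum_fderiv_bmat_eq (x p y : E3) (hy : y ≠ x) (i : Fin 3) :
    ∑ j : Fin 3,
        fderiv ℝ (fun z : E3 => bmat (‖x - z‖⁻¹ • (x - z)) p i j) y (EuclideanSpace.single j 1) =
      phat p i / (‖x - y‖ + ⟪phat p, x - y⟫) -
        (x - y) i / (‖x - y‖ + ⟪phat p, x - y⟫) ^ 2 *
          (⟪phat p, x - y⟫ / ‖x - y‖ + ‖phat p‖ ^ 2) := by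
  have hu : x - y ≠ 0 := sub_ne_zero.mpr hy.symm
  have hN : ‖x - y‖ + ⟪phat p, x - y⟫ ≠ 0 :=
    (lt_of_lt_of_le (div_pos (norm_pos_iff.mpr hu) (by linarith [p0_sq_pos p]))
      (norm_div_two_mul_p0_sq_le_norm_add_inner p (x - y))).ne'
  have hg : HasFDerivAt (fun z : E3 => (x - z) i / (‖x - z‖ + ⟪phat p, x - z⟫)) _ y :=
    (hasFDerivAt_div_norm_add_inner (EuclideanSpace.proj i) (phat p) hu hN).comp y
      ((hasFDerivAt_id y).const_sub x)
  simp_rw [bmat_smul_inv_norm]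
  refine (sum_fderiv_const_sub_mul_apply_single hg (fun j => if i = j then 1 else 0) _).trans ?_
  simp only [ContinuousLinearMap.comp_apply, neg_apply, ContinuousLinearMap.id_apply, map_neg,
    neg_neg, sub_apply, smul_apply, add_apply, innerSL_apply_apply, PiLp.proj_apply, smul_eq_mul,
    real_inner_self_eq_norm_sq]
  rw [real_inner_comm]
  ring

lemma abs_div_sub_div_sq_mul_le {a b r t Q P : ℝ} (hr : 0 < r) (hP : 0 < P) (ha : |a| ≤ 1)
    (hb : |b| ≤ r) (hD : r / (2 * P) ≤ r + t) (hQ : Q = 1 - P⁻¹) :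
    |a / (r + t) - b / (r + t) ^ 2 * (t / r + Q)| ≤ 8 * P / r := by
  set D := r + t with hDdef
  have hDpos : 0 < D := lt_of_lt_of_le (by positivity) hD
  have hrD : r ≤ 2 * P * D := by rwa [div_le_iff₀ (by positivity), mul_comm] at hD
  have hK : D⁻¹ ≤ 2 * P / r := by
    rw [inv_le_iff_one_le_mul₀ hDpos, div_mul_eq_mul_div, le_div_iff₀ hr]
    linarith
  have hsplit : a / D - b / D ^ 2 * (t / r + Q) = a / D - b / (r * D) + b / (P * D ^ 2) := by
    rw [hQ, show t = D - r by rw [hDdef]; ring]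
    field_simp
    ring
  have h₁ : |a / D| ≤ D⁻¹ := by
    rw [abs_div, abs_of_pos hDpos, div_eq_mul_inv]
    exact mul_le_of_le_one_left (by positivity) ha
  have h₂ : |b / (r * D)| ≤ D⁻¹ := by
    rw [abs_div, abs_of_pos (mul_pos hr hDpos), div_le_iff₀ (mul_pos hr hDpos)]
    calc |b| ≤ r := hb
      _ = D⁻¹ * (r * D) := by field_simp
  have h₃ : |b / (P * D ^ 2)| ≤ 2 * D⁻¹ := by
    have : 0 < P * D ^ 2 := by positivity
    rw [abs_div, abs_of_pos this, div_le_iff₀ this]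
    calc |b| ≤ 2 * P * D := hb.trans hrD
      _ = 2 * D⁻¹ * (P * D ^ 2) := by field_simp
  rw [hsplit]
  calc |a / D - b / (r * D) + b / (P * D ^ 2)|
      ≤ |a / D| + |b / (r * D)| + |b / (P * D ^ 2)| :=
        (abs_add_le _ _).trans (add_le_add_left (abs_sub _ _) _)
    _ ≤ 4 * D⁻¹ := by linarith
    _ ≤ 4 * (2 * P / r) := by linarith
    _ = 8 * P / r := by ring

lemma abs_sum_fderiv_bmat_le (x p y : E3) (hy : y ≠ x) (i : Fin 3) :
    |∑ j : Fin 3,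
        fderiv ℝ (fun z : E3 => bmat (‖x - z‖⁻¹ • (x - z)) p i j) y (EuclideanSpace.single j 1)|
      ≤ 8 * p0 p ^ 2 / ‖x - y‖ := by
  rw [sum_fderiv_bmat_eq x p y hy i]
  exact abs_div_sub_div_sq_mul_le (norm_pos_iff.mpr (sub_ne_zero.mpr hy.symm)) (p0_sq_pos p)
    ((abs_apply_le_norm _ i).trans (norm_phat_lt_one p).le) (abs_apply_le_norm _ i)
    (norm_div_two_mul_p0_sq_le_norm_add_inner p (x - y)) (norm_phat_sq p)

/-- (a) `|b_{ij}(ω,p)| ≤ 2p₀² + 1` for all unit `ω`, all `p` and all `i,j`; and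
(b) there is an absolute constant `C` such that for fixed `x, p`, with `ω(y) = (x−y)/|x−y|`,
`|Σ_j ∂_{y_j} b_{ij}(ω(y),p)| ≤ C p₀²/|x − y|` for each `i` and all `y ≠ x`. -/
theorem stmt6 :
    (∀ (ω p : E3), ‖ω‖ = 1 → ∀ i j : Fin 3, |bmat ω p i j| ≤ 2 * (p0 p) ^ 2 + 1) ∧
    ∃ C : ℝ, 0 < C ∧ ∀ (x p y : E3), y ≠ x → ∀ i : Fin 3,
      |∑ j : Fin 3,
          fderiv ℝ (fun z : E3 => bmat (‖x - z‖⁻¹ • (x - z)) p i j) y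
            (EuclideanSpace.single j 1)|
        ≤ C * (p0 p) ^ 2 / ‖x - y‖ :=
  ⟨abs_bmat_le, 8, by norm_num, abs_sum_fderiv_bmat_le⟩
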